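/- arXiv:1610.06209 — 3 statements merged into one kernel-verified Lean document; each statement's English description precedes it below -/
import Mathlib

section
/- Let H be the L2-normalized n×n Hadamard matrix and D a diagonal matrix with i.i.d. Rademacher (±1) diagonal entries. Then for every x ∈ ℝⁿ with ‖x‖₂ = 1, P[‖HDx‖_∞ > log(n)/√n] ≤ 2n·exp(-log²(n)/8). -/
/-!
Each coordinate of `HDx` is a Rademacher sum `∑ⱼ Hᵢⱼ xⱼ dⱼ`. A Rademacher variable has moment
generating function `cosh t ≤ exp (t² / 2)`, so this sum is sub-Gaussian with variance proxy
`∑ⱼ Hᵢⱼ² xⱼ² = 1 / n`, and Hoeffding's inequality at `ε = log n / √n` bounds the probability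
of `|(HDx)ᵢ| > ε` by `2 exp (-log² n / 2) ≤ 2 exp (-log² n / 8)`. A union bound over the `n`
coordinates concludes.
-/

open Matrix

open MeasureTheory ProbabilityTheory

def IsRademacher {Ω : Type*} {mΩ : MeasurableSpace Ω} (X : Ω → ℝ) (μ : Measure Ω) : Prop :=
  μ {ω | X ω = 1} = 1 / 2 ∧ μ {ω | X ω = -1} = 1 / 2

namespace IsRademacher

variable {Ω : Type*} {mΩ : MeasurableSpace Ω} {μ : Measure Ω} [IsProbabilityMeasure μ]
  {X : Ω → ℝ}

lemma ae_eq_one_or_eq_neg_one (hX : IsRademacher X μ) (hm : Measurable X) :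
    ∀ᵐ ω ∂μ, X ω = 1 ∨ X ω = -1 := by
  have hdisj : Disjoint {ω | X ω = 1} {ω | X ω = -1} :=
    Set.disjoint_left.mpr fun ω (h1 : X ω = 1) (h2 : X ω = -1) => by linarith
  have hA : MeasurableSet {ω | X ω = 1} := hm (measurableSet_singleton 1)
  have hB : MeasurableSet {ω | X ω = -1} := hm (measurableSet_singleton (-1))
  refine (ae_mem_iff_measure_eq (hA.union hB).nullMeasurableSet).mpr ?_
  rw [measure_union hdisj hB, hX.1, hX.2, one_div, ENNReal.inv_two_add_inv_two, measure_univ]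

lemma comp_ae_eq_indicator (hX : IsRademacher X μ) (hm : Measurable X) (f : ℝ → ℝ) :
    (fun ω => f (X ω)) =ᵐ[μ] fun ω =>
      {ω | X ω = 1}.indicator (fun _ => f 1) ω + {ω | X ω = -1}.indicator (fun _ => f (-1)) ω := by
  filter_upwards [hX.ae_eq_one_or_eq_neg_one hm] with ω hω
  rcases hω with h | h <;> norm_num [Set.indicator, h]

lemma integrable_comp (hX : IsRademacher X μ) (hm : Measurable X) (f : ℝ → ℝ) :
    Integrable (fun ω => f (X ω)) μ :=
  (((integrable_const _).indicator (hm (measurableSet_singleton 1))).add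
    ((integrable_const _).indicator (hm (measurableSet_singleton (-1))))).congr
    (hX.comp_ae_eq_indicator hm f).symm

lemma integral_comp (hX : IsRademacher X μ) (hm : Measurable X) (f : ℝ → ℝ) :
    ∫ ω, f (X ω) ∂μ = (f 1 + f (-1)) / 2 := by
  have hA : MeasurableSet {ω | X ω = 1} := hm (measurableSet_singleton 1)
  have hB : MeasurableSet {ω | X ω = -1} := hm (measurableSet_singleton (-1))
  rw [integral_congr_ae (hX.comp_ae_eq_indicator hm f),
    integral_add ((integrable_const _).indicator hA) ((integrable_const _).indicator hB),
    integral_indicator hA, integral_indicator hB, setIntegral_const, setIntegral_const,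
    measureReal_def, measureReal_def, hX.1, hX.2]
  norm_num
  ring

lemma mgf_eq (hX : IsRademacher X μ) (hm : Measurable X) (t : ℝ) :
    mgf X μ t = Real.cosh t := by
  rw [mgf, hX.integral_comp hm (fun y => Real.exp (t * y)), Real.cosh_eq]
  simp

lemma hasSubgaussianMGF (hX : IsRademacher X μ) (hm : Measurable X) :
    HasSubgaussianMGF X 1 μ where
  integrable_exp_mul t := hX.integrable_comp hm (fun y => Real.exp (t * y))
  mgf_le t := by
    rw [hX.mgf_eq hm, NNReal.coe_one, one_mul]
    exact Real.cosh_le_exp_half_sq t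

end IsRademacher

section RademacherSum

variable {Ω ι : Type*} {mΩ : MeasurableSpace Ω} {μ : Measure Ω} [IsProbabilityMeasure μ]
  [Fintype ι] {X : ι → Ω → ℝ}

lemma measureReal_le_sum_mul_rademacher_le (hindep : iIndepFun X μ)
    (hm : ∀ i, Measurable (X i)) (hX : ∀ i, IsRademacher (X i) μ) (a : ι → ℝ) {ε : ℝ}
    (hε : 0 ≤ ε) :
    μ.real {ω | ε ≤ ∑ i, a i * X i ω} ≤ Real.exp (-ε ^ 2 / (2 * ∑ i, a i ^ 2)) := by
  have h := HasSubgaussianMGF.measure_sum_ge_le_of_iIndepFun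
    (hindep.comp (fun i y => a i * y) fun i => measurable_const_mul (a i)) (s := Finset.univ)
    (fun i _ => ((hX i).hasSubgaussianMGF (hm i)).const_mul (a i)) hε
  convert h using 5
  · simp
  · rw [NNReal.coe_sum]
    exact Finset.sum_congr rfl fun i _ => (mul_one (a i ^ 2)).symm

lemma measure_le_abs_sum_mul_rademacher_le (hindep : iIndepFun X μ)
    (hm : ∀ i, Measurable (X i)) (hX : ∀ i, IsRademacher (X i) μ) (a : ι → ℝ) {ε : ℝ}
    (hε : 0 ≤ ε) :
    μ {ω | ε ≤ |∑ i, a i * X i ω|} ≤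
      ENNReal.ofReal (2 * Real.exp (-ε ^ 2 / (2 * ∑ i, a i ^ 2))) := by
  have hsub : {ω | ε ≤ |∑ i, a i * X i ω|} ⊆
      {ω | ε ≤ ∑ i, a i * X i ω} ∪ {ω | ε ≤ ∑ i, -a i * X i ω} := fun ω h => by
    simpa [neg_mul, Finset.sum_neg_distrib] using le_abs.mp h
  calc μ {ω | ε ≤ |∑ i, a i * X i ω|}
      ≤ μ {ω | ε ≤ ∑ i, a i * X i ω} + μ {ω | ε ≤ ∑ i, -a i * X i ω} :=
        (measure_mono hsub).trans (measure_union_le _ _)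
    _ = ENNReal.ofReal (μ.real {ω | ε ≤ ∑ i, a i * X i ω}) +
          ENNReal.ofReal (μ.real {ω | ε ≤ ∑ i, -a i * X i ω}) := by
        rw [ofReal_measureReal, ofReal_measureReal]
    _ ≤ ENNReal.ofReal (Real.exp (-ε ^ 2 / (2 * ∑ i, a i ^ 2))) +
          ENNReal.ofReal (Real.exp (-ε ^ 2 / (2 * ∑ i, a i ^ 2))) := by
        gcongr
        · exact measureReal_le_sum_mul_rademacher_le hindep hm hX a hε
        · simpa only [Pi.neg_apply, neg_sq] using
            measureReal_le_sum_mul_rademacher_le hindep hm hX (-a) hε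
    _ = ENNReal.ofReal (2 * Real.exp (-ε ^ 2 / (2 * ∑ i, a i ^ 2))) := by
        rw [← ENNReal.ofReal_add (by positivity) (by positivity), ← two_mul]

end RademacherSum

section HadamardDiagonal

variable {Ω : Type*} {mΩ : MeasurableSpace Ω} {μ : Measure Ω} [IsProbabilityMeasure μ] {n : ℕ}
  {H : Matrix (Fin n) (Fin n) ℝ} {d : Fin n → Ω → ℝ} {x : Fin n → ℝ} {ε : ℝ}

lemma measure_lt_abs_mulVec_apply_le (hHent : ∀ i j, |H i j| = 1 / Real.sqrt n)
    (hmeas : ∀ i, Measurable (d i)) (hindep : iIndepFun d μ) (hdist : ∀ i, IsRademacher (d i) μ)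
    (hx : ∑ i, x i ^ 2 = 1) (hε : 0 ≤ ε) (i : Fin n) :
    μ {ω | ε < |H.mulVec (fun j => d j ω * x j) i|} ≤
      ENNReal.ofReal (2 * Real.exp (-(n * ε ^ 2) / 2)) := by
  have hn : (0 : ℝ) < n := by exact_mod_cast i.pos
  have hvar : ∑ j, (H i j * x j) ^ 2 = 1 / n := by
    simp_rw [mul_pow, ← sq_abs (H i _), hHent, div_pow, Real.sq_sqrt hn.le, ← Finset.mul_sum, hx]
    ring
  have hcoord (ω : Ω) : H.mulVec (fun j => d j ω * x j) i = ∑ j, H i j * x j * d j ω := by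
    simp only [mulVec, dotProduct]
    exact Finset.sum_congr rfl fun j _ => by ring
  calc μ {ω | ε < |H.mulVec (fun j => d j ω * x j) i|}
      ≤ μ {ω | ε ≤ |∑ j, H i j * x j * d j ω|} :=
        measure_mono fun ω h => (hcoord ω ▸ h : ε < _).le
    _ ≤ _ := measure_le_abs_sum_mul_rademacher_le hindep hmeas hdist _ hε
    _ = _ := by
        rw [hvar]
        field_simp

lemma measure_exists_lt_abs_mulVec_apply_le (hHent : ∀ i j, |H i j| = 1 / Real.sqrt n)
    (hmeas : ∀ i, Measurable (d i)) (hindep : iIndepFun d μ) (hdist : ∀ i, IsRademacher (d i) μ)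
    (hx : ∑ i, x i ^ 2 = 1) (hε : 0 ≤ ε) :
    μ {ω | ∃ i, ε < |H.mulVec (fun j => d j ω * x j) i|} ≤
      ENNReal.ofReal (2 * n * Real.exp (-(n * ε ^ 2) / 2)) :=
  calc μ {ω | ∃ i, ε < |H.mulVec (fun j => d j ω * x j) i|}
      ≤ ∑ i, μ {ω | ε < |H.mulVec (fun j => d j ω * x j) i|} := by
        rw [Set.ofPred_exists]
        exact measure_iUnion_fintype_le _ _
    _ ≤ ∑ _ : Fin n, ENNReal.ofReal (2 * Real.exp (-(n * ε ^ 2) / 2)) :=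
        Finset.sum_le_sum fun i _ =>
          measure_lt_abs_mulVec_apply_le hHent hmeas hindep hdist hx hε i
    _ = ENNReal.ofReal (2 * n * Real.exp (-(n * ε ^ 2) / 2)) := by
        rw [Finset.sum_const, Finset.card_univ, Fintype.card_fin, nsmul_eq_mul,
          ← ENNReal.ofReal_natCast, ← ENNReal.ofReal_mul (Nat.cast_nonneg n)]
        ring_nf

end HadamardDiagonal

theorem HD_balanced_general
    {Ω : Type*} {mΩ : MeasurableSpace Ω} {μ : Measure Ω} [IsProbabilityMeasure μ]
    (n : ℕ) (H : Matrix (Fin n) (Fin n) ℝ)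
    (hHent : ∀ i j, |H i j| = 1 / Real.sqrt n)
    (d : Fin n → Ω → ℝ)
    (hmeas : ∀ i, Measurable (d i))
    (hindep : iIndepFun d μ)
    (hdist : ∀ i, μ {ω | d i ω = 1} = 1 / 2 ∧ μ {ω | d i ω = -1} = 1 / 2)
    (x : Fin n → ℝ) (hx : ∑ i, x i ^ 2 = 1) :
    μ {ω | ∃ i, Real.log n / Real.sqrt n < |H.mulVec (fun j => d j ω * x j) i|} ≤
      ENNReal.ofReal (2 * n * Real.exp (-(Real.log n) ^ 2 / 8)) := by
  rcases Nat.eq_zero_or_pos n with rfl | hn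
  · simp
  have hexponent : (n : ℝ) * (Real.log n / Real.sqrt n) ^ 2 = Real.log n ^ 2 := by
    rw [div_pow, Real.sq_sqrt n.cast_nonneg]
    field_simp
  calc _ ≤ ENNReal.ofReal (2 * n * Real.exp (-(Real.log n) ^ 2 / 2)) := by
        simpa only [hexponent] using measure_exists_lt_abs_mulVec_apply_le hHent hmeas hindep hdist
          hx (div_nonneg (Real.log_natCast_nonneg n) (Real.sqrt_nonneg n))
    _ ≤ ENNReal.ofReal (2 * n * Real.exp (-(Real.log n) ^ 2 / 8)) := by
        gcongr ENNReal.ofReal (2 * n * Real.exp ?_)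
        linarith [sq_nonneg (Real.log n)]

/-- The matrix `HD` (normalized Hadamard times a random diagonal ±1 matrix) is
`(log n, 2n·exp(-log²n/8))`-balanced. -/
theorem HD_balanced
    {Ω : Type*} {mΩ : MeasurableSpace Ω} {μ : Measure Ω} [IsProbabilityMeasure μ]
    (n : ℕ) (hn : 0 < n) (H : Matrix (Fin n) (Fin n) ℝ)
    (hHorth : Hᵀ * H = 1)
    (hHent : ∀ i j, |H i j| = 1 / Real.sqrt n)
    (d : Fin n → Ω → ℝ)
    (hmeas : ∀ i, Measurable (d i))
    (hindep : iIndepFun d μ)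
    (hdist : ∀ i, μ {ω | d i ω = 1} = 1 / 2 ∧ μ {ω | d i ω = -1} = 1 / 2)
    (x : Fin n → ℝ) (hx : ∑ i, x i ^ 2 = 1) :
    μ {ω | ∃ i, Real.log n / Real.sqrt n < |H.mulVec (fun j => d j ω * x j) i|} ≤
      ENNReal.ofReal (2 * n * Real.exp (-(Real.log n) ^ 2 / 8)) :=
  HD_balanced_general (mΩ := mΩ) n H hHent d hmeas hindep hdist x hx
end

section
/- Let H be the L2-normalized n×n Hadamard matrix (all entries ±1/√n, orthonormal rows and columns). For each i ∈ {1,...,n} define Wⁱ ∈ ℝ^{n×n} by Wⁱ_{a,b} = √n · h_{i,a} · h_{a,b}. Then for all i, j: ‖(Wʲ)ᵀ Wⁱ‖_F² ≤ n. In particular, ‖(Wʲ)ᵀWⁱ‖_F² = Σ_{l,t} (Σ_k n·h_{j,k}h_{k,l}h_{i,k}h_{k,t})² = n. -/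
open Matrix

/-!
Write `Wʲᵀ Wⁱ = Hᵀ D H` with `D = diag(n·h_{j,k}·h_{i,k})`. Since `H Hᵀ = 1`, its squared
Frobenius norm is `tr(Hᵀ D H Hᵀ D H) = tr(D² H Hᵀ) = tr(D²)`, and every diagonal entry of `D`
is `±1` because all entries of `H` have square `1/n`.
-/

section

variable {m n R : Type*} [Fintype m] [CommRing R]

theorem transpose_mul_diagonal_mul_apply [DecidableEq m] (H : Matrix m n R) (d : m → R)
    (a b : n) :
    (Hᵀ * diagonal d * H) a b = ∑ k, H k a * d k * H k b := by
  rw [mul_apply]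
  simp only [mul_diagonal, transpose_apply]

variable [Fintype n]

theorem sum_sq_eq_trace_mul_transpose (A : Matrix m n R) :
    ∑ a, ∑ b, A a b ^ 2 = trace (A * Aᵀ) := by
  simp only [trace, diag, mul_apply, transpose_apply, sq]

theorem sum_sq_transpose_mul_diagonal_mul [DecidableEq m] {H : Matrix m n R} (hH : H * Hᵀ = 1)
    (d : m → R) :
    ∑ a, ∑ b, (Hᵀ * diagonal d * H) a b ^ 2 = ∑ k, d k ^ 2 := by
  have hsymm : (Hᵀ * diagonal d * H)ᵀ = Hᵀ * diagonal d * H := by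
    simp only [transpose_mul, diagonal_transpose, transpose_transpose, Matrix.mul_assoc]
  calc ∑ a, ∑ b, (Hᵀ * diagonal d * H) a b ^ 2
      = trace (Hᵀ * diagonal d * (H * Hᵀ) * diagonal d * H) := by
        rw [sum_sq_eq_trace_mul_transpose, hsymm]
        simp only [Matrix.mul_assoc]
    _ = trace (Hᵀ * diagonal (fun k ↦ d k * d k) * H) := by
        rw [hH, Matrix.mul_one, Matrix.mul_assoc Hᵀ, diagonal_mul_diagonal]
    _ = trace (H * Hᵀ * diagonal (fun k ↦ d k * d k)) := by
        rw [trace_mul_comm, Matrix.mul_assoc]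
    _ = ∑ k, d k ^ 2 := by
        simp only [hH, Matrix.one_mul, trace_diagonal, sq]

end

theorem sq_eq_inv_of_abs_eq_one_div_sqrt {x r : ℝ} (hr : 0 ≤ r) (hx : |x| = 1 / √r) :
    x ^ 2 = r⁻¹ := by
  rw [← sq_abs, hx, div_pow, one_pow, Real.sq_sqrt hr, one_div]

theorem W_frobenius_norm_general (n : ℕ) (H : Matrix (Fin n) (Fin n) ℝ)
    (hHorth' : H * Hᵀ = 1)
    (hHent : ∀ a b, |H a b| = 1 / Real.sqrt n)
    (W : Fin n → Matrix (Fin n) (Fin n) ℝ)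
    (hW : ∀ i a b, W i a b = Real.sqrt n * H i a * H a b)
    (i j : Fin n) :
    (∑ l, ∑ t, (∑ k, W j k l * W i k t) ^ 2 ≤ (n : ℝ)) ∧
    ∑ l, ∑ t, (∑ k, (n : ℝ) * H j k * H k l * H i k * H k t) ^ 2 = (n : ℝ) := by
  set d : Fin n → ℝ := fun k ↦ n * H j k * H i k
  have hd : ∀ k, d k ^ 2 = 1 := fun k ↦ by
    have hn : (n : ℝ) ≠ 0 := Nat.cast_ne_zero.mpr k.pos.ne'
    have hsq := fun a b ↦ sq_eq_inv_of_abs_eq_one_div_sqrt (Nat.cast_nonneg n) (hHent a b)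
    simp only [d, mul_pow, hsq]
    field_simp
  have hWW : ∀ k l t, W j k l * W i k t = n * H j k * H k l * H i k * H k t := fun k l t ↦ by
    rw [hW, hW]
    linear_combination H j k * H k l * H i k * H k t * Real.mul_self_sqrt (Nat.cast_nonneg n)
  have key : ∑ l, ∑ t, (∑ k, (n : ℝ) * H j k * H k l * H i k * H k t) ^ 2 = n := by
    calc _ = ∑ l, ∑ t, (Hᵀ * diagonal d * H) l t ^ 2 := by
          simp only [transpose_mul_diagonal_mul_apply, d]
          ac_rfl
      _ = ∑ k, d k ^ 2 := sum_sq_transpose_mul_diagonal_mul hHorth' d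
      _ = n := by simp [hd]
  simp only [hWW]
  exact ⟨key.le, key⟩

/-- For the normalized Hadamard matrix `H` and `Wⁱ_{a,b} = √n·h_{i,a}·h_{a,b}`, the
squared Frobenius norm of `(Wʲ)ᵀWⁱ` is at most `n`, and in fact equals `n`. -/
theorem W_frobenius_norm (n : ℕ) (H : Matrix (Fin n) (Fin n) ℝ)
    (hHorth : Hᵀ * H = 1) (hHorth' : H * Hᵀ = 1)
    (hHent : ∀ a b, |H a b| = 1 / Real.sqrt n)
    (W : Fin n → Matrix (Fin n) (Fin n) ℝ)
    (hW : ∀ i a b, W i a b = Real.sqrt n * H i a * H a b)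
    (i j : Fin n) :
    (∑ l, ∑ t, (∑ k, W j k l * W i k t) ^ 2 ≤ (n : ℝ)) ∧
    ∑ l, ∑ t, (∑ k, (n : ℝ) * H j k * H k l * H i k * H k t) ^ 2 = (n : ℝ) :=
  W_frobenius_norm_general n H hHorth' hHent W hW i j
end

section
/- Let B ∈ ℝ^{N×N} be a symmetric matrix with B_{i,i} = 1 for all i and |B_{i,j}| ≤ t for all i ≠ j, where 0 < t ≤ 1/(N-1). Then det(B) ≥ (1 - t(N-1))·(1+t)^{N-1} ≥ 0; in particular if t = 1/N then det(B) > 0 and B is invertible. -/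
/-!
By Gershgorin, every eigenvalue `λᵢ` of `B` is at least `1 - (N-1)t`; the trace gives
`∑ λᵢ = N` and the Frobenius norm `∑ λᵢ² ≤ N (1 + (N-1)t²)`. The extremal matrix `(1+t)I - tJ`,
with eigenvalues `1+t` (`N-1` times) and `1-(N-1)t`, attains all three bounds. After the
normalisation `wᵢ = 1 - λᵢ/(1+t)`, `u = Nt/(1+t)` they read `wᵢ ≤ u`, `∑ wᵢ = u`, `∑ wᵢ² ≤ u²`,
and the claim becomes `∏ (1 - wᵢ) ≥ 1 - u`. This follows by summing
`log (1 - w) ≥ -w + D w²` for `w ≤ u`, where `D = (log (1-u) + u)/u² ≤ -1/2` makes the quadratic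
meet `log (1 - w)` at `w = 0` and `w = u`.
-/

open Real Finset Matrix

lemma Real.log_one_sub_le_neg_sub_sq_div_two {u : ℝ} (hu0 : 0 ≤ u) (hu1 : u < 1) :
    log (1 - u) ≤ -u - u ^ 2 / 2 := by
  have hsum := hasSum_pow_div_log_of_abs_lt_one (abs_lt.mpr ⟨by linarith, hu1⟩)
  have := sum_le_hasSum (range 2) (fun n _ => by positivity) hsum
  norm_num [sum_range_succ] at this
  linarith

lemma Real.hasDerivAt_log_one_sub_add_sub_mul_sq (D : ℝ) {x : ℝ} (hx : x < 1) :
    HasDerivAt (fun y => log (1 - y) + y - D * y ^ 2) (x * (-(1 - x)⁻¹ - 2 * D)) x := by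
  have h1x : 1 - x ≠ 0 := by linarith
  refine (((((hasDerivAt_id' x).const_sub 1).log h1x).add (hasDerivAt_id' x)).sub
    ((hasDerivAt_pow 2 x).const_mul D)).congr_deriv ?_
  field_simp
  ring

lemma Real.neg_add_mul_sq_le_log_one_sub {u w : ℝ} (hu0 : 0 < u) (hu1 : u < 1) (hw : w ≤ u) :
    -w + (log (1 - u) + u) / u ^ 2 * w ^ 2 ≤ log (1 - w) := by
  set D := (log (1 - u) + u) / u ^ 2 with hD
  set g : ℝ → ℝ := fun y => log (1 - y) + y - D * y ^ 2
  set r : ℝ → ℝ := fun x => -(1 - x)⁻¹ - 2 * D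
  have hD_le : D ≤ -1 / 2 := by
    rw [hD, div_le_iff₀ (by positivity)]
    linarith [log_one_sub_le_neg_sub_sq_div_two hu0.le hu1]
  have hr_anti : ∀ x y, x ≤ y → y < 1 → r y ≤ r x := fun x y hxy hy => by
    have := inv_anti₀ (by linarith : 0 < 1 - y) (by linarith : 1 - y ≤ 1 - x)
    simp only [r]
    linarith
  have hr0 : 0 ≤ r 0 := by simp only [r]; norm_num; linarith
  have hg0 : g 0 = 0 := by simp [g]
  have hgu : g u = 0 := by simp only [g, hD]; field_simp; ring
  have hderiv : ∀ a b, b < 1 → ∀ x ∈ interior (Set.Icc a b),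
      HasDerivWithinAt g (x * r x) (interior (Set.Icc a b)) x := fun a b hb x hx => by
    rw [interior_Icc] at hx
    exact (hasDerivAt_log_one_sub_add_sub_mul_sq D (hx.2.trans hb)).hasDerivWithinAt
  have hcont : ∀ a b, b < 1 → ContinuousOn g (Set.Icc a b) := fun a b hb x hx =>
    (hasDerivAt_log_one_sub_add_sub_mul_sq D (hx.2.trans_lt hb)).continuousAt.continuousWithinAt
  -- `g' = x * r x` with `r` decreasing and `r 0 ≥ 0`, while `g 0 = g u = 0`.
  suffices 0 ≤ g w by simp only [g] at this; linarith
  rcases le_or_gt w 0 with hw0 | hw0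
  · have := antitoneOn_of_hasDerivWithinAt_nonpos (convex_Icc w 0) (hcont w 0 one_pos)
      (hderiv w 0 one_pos) fun x hx => by
        rw [interior_Icc] at hx
        nlinarith [hr_anti x 0 hx.2.le one_pos, hx.2]
    simpa [hg0] using this ⟨le_rfl, hw0⟩ ⟨hw0, le_rfl⟩ hw0
  rcases le_or_gt 0 (r w) with hrw | hrw
  · have := monotoneOn_of_hasDerivWithinAt_nonneg (convex_Icc 0 w) (hcont 0 w (hw.trans_lt hu1))
      (hderiv 0 w (hw.trans_lt hu1)) fun x hx => by
        rw [interior_Icc] at hx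
        nlinarith [hr_anti x w hx.2.le (hw.trans_lt hu1), hx.1]
    simpa [hg0] using this ⟨le_rfl, hw0.le⟩ ⟨hw0.le, le_rfl⟩ hw0.le
  · have := antitoneOn_of_hasDerivWithinAt_nonpos (convex_Icc w u) (hcont w u hu1)
      (hderiv w u hu1) fun x hx => by
        rw [interior_Icc] at hx
        nlinarith [hr_anti w x hx.1.le (hx.2.trans hu1), hx.1]
    simpa [hgu] using this ⟨le_rfl, hw⟩ ⟨hw, le_rfl⟩ hw

lemma Finset.one_sub_le_prod_one_sub {ι : Type*} (s : Finset ι) (w : ι → ℝ) {u : ℝ}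
    (hu0 : 0 < u) (hu1 : u ≤ 1) (hw : ∀ i ∈ s, w i ≤ u) (hsum : ∑ i ∈ s, w i = u)
    (hsq : ∑ i ∈ s, w i ^ 2 ≤ u ^ 2) :
    1 - u ≤ ∏ i ∈ s, (1 - w i) := by
  rcases hu1.lt_or_eq with hu1 | rfl
  swap
  · simpa using prod_nonneg fun i hi => sub_nonneg.mpr (hw i hi)
  set D := (log (1 - u) + u) / u ^ 2 with hD
  have hpos : ∀ i ∈ s, 0 < 1 - w i := fun i hi => by linarith [hw i hi]
  have hD_nonpos : D ≤ 0 := by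
    rw [hD, div_nonpos_iff]
    exact Or.inr ⟨by linarith [log_one_sub_le_neg_sub_sq_div_two hu0.le hu1, sq_nonneg u],
      by positivity⟩
  rw [← log_le_log_iff (by linarith) (prod_pos hpos), log_prod fun i hi => (hpos i hi).ne']
  calc log (1 - u) = -u + D * u ^ 2 := by rw [hD]; field_simp; ring
    _ ≤ -u + D * ∑ i ∈ s, w i ^ 2 := by linarith [mul_le_mul_of_nonpos_left hsq hD_nonpos]
    _ = ∑ i ∈ s, (-w i + D * w i ^ 2) := by rw [sum_add_distrib, sum_neg_distrib, hsum, mul_sum]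
    _ ≤ ∑ i ∈ s, log (1 - w i) :=
      sum_le_sum fun i hi => neg_add_mul_sq_le_log_one_sub hu0 hu1 (hw i hi)

lemma le_prod_of_sum_eq_of_sum_sq_le {ι : Type*} [Fintype ι] [Nonempty ι] {t : ℝ} (ht : 0 < t)
    (hts : t * ((Fintype.card ι : ℝ) - 1) ≤ 1) (μ : ι → ℝ)
    (hμ : ∀ i, 1 - t * ((Fintype.card ι : ℝ) - 1) ≤ μ i) (hsum : ∑ i, μ i = Fintype.card ι)
    (hsq : ∑ i, μ i ^ 2 ≤ Fintype.card ι * (1 + ((Fintype.card ι : ℝ) - 1) * t ^ 2)) :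
    (1 - t * ((Fintype.card ι : ℝ) - 1)) * (1 + t) ^ (Fintype.card ι - 1) ≤ ∏ i, μ i := by
  set n := Fintype.card ι with hn
  have ht1 : 0 < 1 + t := by linarith
  set u := n * t / (1 + t)
  set w : ι → ℝ := fun i => 1 - μ i / (1 + t)
  have hu0 : 0 < u := by positivity
  have hu1 : u ≤ 1 := by rw [div_le_one ht1]; linarith
  have hw : ∀ i ∈ univ, w i ≤ u := fun i _ => by
    simp only [w, u]
    rw [sub_le_iff_le_add, ← add_div, le_div_iff₀ ht1]
    linarith [hμ i]
  have hwsum : ∑ i ∈ univ, w i = u := by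
    simp only [w, u, sum_sub_distrib, ← sum_div, hsum, sum_const, card_univ, ← hn, nsmul_eq_mul,
      mul_one]
    field_simp
    ring
  have hwsq : ∑ i ∈ univ, w i ^ 2 ≤ u ^ 2 := by
    have hsq_expand : ∀ i, w i ^ 2 = ((1 + t) ^ 2 - 2 * (1 + t) * μ i + μ i ^ 2) / (1 + t) ^ 2 :=
      fun i => by simp only [w]; field_simp; ring
    simp only [hsq_expand, ← sum_div, sum_add_distrib, sum_sub_distrib, ← mul_sum, hsum]
    rw [div_pow, div_le_div_iff_of_pos_right (by positivity)]
    simp only [sum_const, card_univ, ← hn, nsmul_eq_mul]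
    nlinarith
  have hprod : ∏ i, μ i = (1 + t) ^ n * ∏ i, (1 - w i) := by
    rw [hn, ← card_univ, ← prod_const, ← prod_mul_distrib]
    exact prod_congr rfl fun i _ => by simp only [w]; field_simp; ring
  have hpow : (1 + t) ^ n = (1 + t) ^ (n - 1) * (1 + t) := by
    rw [← pow_succ, Nat.sub_add_cancel Fintype.card_pos]
  rw [hprod, hpow]
  calc (1 - t * (n - 1)) * (1 + t) ^ (n - 1) = (1 + t) ^ (n - 1) * (1 + t) * (1 - u) := by
        simp only [u]; field_simp; ring
    _ ≤ _ := mul_le_mul_of_nonneg_left (one_sub_le_prod_one_sub univ w hu0 hu1 hw hwsum hwsq)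
      (by positivity)

lemma Finset.sum_univ_erase_le {ι : Type*} [Fintype ι] [DecidableEq ι] (i : ι) (f : ι → ℝ) {c : ℝ}
    (h : ∀ j, j ≠ i → f j ≤ c) : ∑ j ∈ univ.erase i, f j ≤ ((Fintype.card ι : ℝ) - 1) * c := by
  refine (sum_le_card_nsmul _ _ c fun j hj => h j (ne_of_mem_erase hj)).trans_eq ?_
  rw [nsmul_eq_mul, cast_card_erase_of_mem (mem_univ i), card_univ]

lemma Matrix.abs_sub_one_le_of_mem_spectrum {n : Type*} [Fintype n] [DecidableEq n]
    {A : Matrix n n ℝ} {t : ℝ} (hdiag : ∀ i, A i i = 1) (hoff : ∀ i j, i ≠ j → |A i j| ≤ t)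
    {μ : ℝ} (hμ : μ ∈ spectrum ℝ A) : |μ - 1| ≤ ((Fintype.card n : ℝ) - 1) * t := by
  rw [← spectrum_toLin', ← Module.End.hasEigenvalue_iff_mem_spectrum] at hμ
  obtain ⟨k, hk⟩ := eigenvalue_mem_ball hμ
  rw [Metric.mem_closedBall, Real.dist_eq, hdiag] at hk
  exact hk.trans (sum_univ_erase_le k _ fun j hj => hoff k j hj.symm)

lemma Matrix.IsHermitian.trace_mul_self {𝕜 n : Type*} [RCLike 𝕜] [Fintype n] [DecidableEq n]
    {A : Matrix n n 𝕜} (hA : A.IsHermitian) :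
    (A * A).trace = ∑ i, (hA.eigenvalues i : 𝕜) ^ 2 := by
  conv_lhs => rw [hA.spectral_theorem, ← map_mul]
  rw [Unitary.conjStarAlgAut_apply, trace_mul_cycle, Unitary.coe_star_mul_self,
    one_mul, diagonal_mul_diagonal, trace_diagonal]
  simp [sq]

lemma Matrix.trace_mul_self_le {n : Type*} [Fintype n] {A : Matrix n n ℝ} {t : ℝ}
    (hsymm : Aᵀ = A) (hdiag : ∀ i, A i i = 1) (hoff : ∀ i j, i ≠ j → |A i j| ≤ t) :
    (A * A).trace ≤ Fintype.card n * (1 + ((Fintype.card n : ℝ) - 1) * t ^ 2) := by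
  classical
  have hrow : ∀ i, (A * A) i i ≤ 1 + ((Fintype.card n : ℝ) - 1) * t ^ 2 := fun i => by
    have hsq : (A * A) i i = ∑ j, A i j ^ 2 := by
      simp only [mul_apply, sq]
      exact sum_congr rfl fun j _ => by rw [← transpose_apply A j i, hsymm]
    rw [hsq, ← add_sum_erase _ _ (mem_univ i), hdiag, one_pow]
    gcongr
    exact sum_univ_erase_le i _ fun j hj => sq_le_sq.mpr ((hoff i j hj.symm).trans (le_abs_self t))
  calc (A * A).trace ≤ ∑ _i : n, (1 + ((Fintype.card n : ℝ) - 1) * t ^ 2) :=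
        sum_le_sum fun i _ => hrow i
    _ = _ := by rw [sum_const, card_univ, nsmul_eq_mul]

/-- Determinant lower bound for a symmetric matrix with unit diagonal and off-diagonal
entries of absolute value at most `t ≤ 1/(N-1)`:
`det(B) ≥ (1 - t(N-1))(1+t)^{N-1} ≥ 0`, and if `t = 1/N` then `det(B) > 0` and `B`
is invertible. -/
theorem near_identity_det_lower_bound (N : ℕ) (hN : 1 < N) (t : ℝ) (ht : 0 < t)
    (ht' : t ≤ 1 / ((N : ℝ) - 1))
    (B : Matrix (Fin N) (Fin N) ℝ) (hsymm : Bᵀ = B)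
    (hdiag : ∀ i, B i i = 1) (hoff : ∀ i j, i ≠ j → |B i j| ≤ t) :
    (1 - t * ((N : ℝ) - 1)) * (1 + t) ^ (N - 1) ≤ B.det ∧
    0 ≤ (1 - t * ((N : ℝ) - 1)) * (1 + t) ^ (N - 1) ∧
    (t = 1 / (N : ℝ) → 0 < B.det ∧ IsUnit B) := by
  have hB : B.IsHermitian := (conjTranspose_eq_transpose_of_trivial B).trans hsymm
  have : Nonempty (Fin N) := ⟨⟨0, by omega⟩⟩
  have hN1 : (1 : ℝ) < N := by exact_mod_cast hN
  have hts : t * ((N : ℝ) - 1) ≤ 1 := (le_div_iff₀ (by linarith)).mp ht'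
  have hlower : ∀ i, 1 - t * ((N : ℝ) - 1) ≤ hB.eigenvalues i := fun i => by
    have := abs_sub_one_le_of_mem_spectrum hdiag hoff (hB.eigenvalues_mem_spectrum_real i)
    rw [Fintype.card_fin, abs_le] at this
    linarith
  have hsum : ∑ i, hB.eigenvalues i = N := by
    simpa [trace, hdiag] using hB.trace_eq_sum_eigenvalues.symm
  have hsq : ∑ i, hB.eigenvalues i ^ 2 ≤ N * (1 + ((N : ℝ) - 1) * t ^ 2) := by
    simpa [hB.trace_mul_self] using trace_mul_self_le hsymm hdiag hoff
  have hdet : (1 - t * ((N : ℝ) - 1)) * (1 + t) ^ (N - 1) ≤ B.det := by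
    simpa [hB.det_eq_prod_eigenvalues] using
      le_prod_of_sum_eq_of_sum_sq_le ht (by simpa using hts) hB.eigenvalues (by simpa using hlower)
        (by simpa using hsum) (by simpa using hsq)
  refine ⟨hdet, by have := sub_nonneg.mpr hts; positivity, fun htN => ?_⟩
  have hpos : 0 < 1 - t * ((N : ℝ) - 1) := by
    rw [htN, one_div_mul_eq_div, sub_pos, div_lt_one (by linarith)]
    linarith
  have hdet_pos : 0 < B.det := lt_of_lt_of_le (by positivity) hdet
  exact ⟨hdet_pos, (isUnit_iff_isUnit_det B).mpr hdet_pos.ne'.isUnit⟩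
end
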